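/- arXiv:2103.11342 — 2 statements merged into one kernel-verified Lean document; each statement's English description precedes it below -/
import Mathlib

section
/- Let N be a C/E net, N' its dual. Construct the e-type net graph NG' of N' (so NG' has one node per condition of N). Transform NG' by renaming each node's name and each condition symbol in all taggings back via the duality, and reverse all '+'/'-' signs in the taggings. The resulting tagged graph equals the c-type net graph of N. -/
structure CENet (α : Type*) where
  C : Set α
  E : Set α
  F : Set (α × α)

def CENet.WF {α : Type*} (N : CENet α) : Prop :=
  Disjoint N.C N.E ∧ N.C.Finite ∧ N.E.Finite ∧
    N.F ⊆ (N.C ×ˢ N.E) ∪ (N.E ×ˢ N.C)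

/-- The dual net: swap the roles of conditions and events, keep the arcs. -/
def CENet.dual {α : Type*} (N : CENet α) : CENet α :=
  ⟨N.E, N.C, N.F⟩

/-- Signs: `false` stands for '-', `true` stands for '+'. -/
abbrev Sign := Bool

/-- A tagged net graph: nodes, signed node taggings and signed edge taggings. -/
structure NetGraph (α : Type*) where
  nodes : Set α
  nodeTag : α → Set (Sign × α)
  edgeTag : α → α → Set (Sign × α × Sign)

/-- The e-type net graph of a C/E net `(C, E; F)`: node set `E`; a node `e`
is tagged `(-, c)` if `(c, e) ∈ F` and `(+, c)` if `(e, c) ∈ F`; the edge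
between `e1` and `e2` carries `(h1, c, h2)` for each condition `c` adjacent
to both, with the signs recording the arc directions. -/
def CENet.egraph {α : Type*} (N : CENet α) : NetGraph α where
  nodes := N.E
  nodeTag e :=
    {p | (p.1 = false ∧ (p.2, e) ∈ N.F) ∨ (p.1 = true ∧ (e, p.2) ∈ N.F)}
  edgeTag e1 e2 :=
    {t | e1 ∈ N.E ∧ e2 ∈ N.E ∧ e1 ≠ e2 ∧
      ((t.1 = false ∧ (t.2.1, e1) ∈ N.F) ∨ (t.1 = true ∧ (e1, t.2.1) ∈ N.F)) ∧
      ((t.2.2 = false ∧ (t.2.1, e2) ∈ N.F) ∨ (t.2.2 = true ∧ (e2, t.2.1) ∈ N.F))}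

/-- The c-type net graph of a C/E net `(C, E; F)`: node set `C`; a node `c`
is tagged `(-, e)` if `(c, e) ∈ F` and `(+, e)` if `(e, c) ∈ F` (the sign
recording whether `F` contains an arc from `c` to `e`, resp. from `e` to
`c`, as in the e-type case), and similarly for edge taggings. -/
def CENet.cgraph {α : Type*} (N : CENet α) : NetGraph α where
  nodes := N.C
  nodeTag c :=
    {p | (p.1 = false ∧ (c, p.2) ∈ N.F) ∨ (p.1 = true ∧ (p.2, c) ∈ N.F)}
  edgeTag c1 c2 :=
    {t | c1 ∈ N.C ∧ c2 ∈ N.C ∧ c1 ≠ c2 ∧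
      ((t.1 = false ∧ (c1, t.2.1) ∈ N.F) ∨ (t.1 = true ∧ (t.2.1, c1) ∈ N.F)) ∧
      ((t.2.2 = false ∧ (c2, t.2.1) ∈ N.F) ∨ (t.2.2 = true ∧ (t.2.1, c2) ∈ N.F))}

/-- Reverse all '+'/'-' signs occurring in the taggings of a net graph.
(The renaming of nodes/conditions via the duality is the identity here,
since events and conditions live in the same ambient type.) -/
def NetGraph.reverseSigns {α : Type*} (G : NetGraph α) : NetGraph α where
  nodes := G.nodes
  nodeTag v := {p | (!p.1, p.2) ∈ G.nodeTag v}
  edgeTag v1 v2 := {t | (!t.1, t.2.1, !t.2.2) ∈ G.edgeTag v1 v2}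

/-- Constructing the e-type net graph of the dual net and reversing all
signs in the taggings yields the c-type net graph of the original net. -/
theorem egraph_dual_reverseSigns_eq_cgraph {α : Type*}
    (N : CENet α) (hN : N.WF) :
    (N.dual.egraph).reverseSigns = N.cgraph := by
  unfold CENet.dual CENet.egraph CENet.cgraph NetGraph.reverseSigns
  refine NetGraph.mk.injEq .. ▸ ⟨rfl, ?_, ?_⟩
  · funext v; ext ⟨s, x⟩
    simp only [Set.mem_setOf_eq, Bool.not_eq_false', Bool.not_eq_true']
    tauto
  · funext v1 v2; ext ⟨s1, x, s2⟩
    simp only [Set.mem_setOf_eq, Bool.not_eq_false', Bool.not_eq_true']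
    tauto
end

section
/- The MIS-based support measure is anti-monotone on single-large-net pattern mining in the following sense: if every embedding of pattern P' contains (as a subnet, injectively and consistently) an embedding of pattern P, with distinct P'-embeddings containing distinct P-embeddings, and event-overlap of the contained P-embeddings implies event-overlap of the containing P'-embeddings, then the maximum size of a pairwise event-disjoint set of P'-embeddings is at most that of P-embeddings. -/
/-- The MIS-based support of a family of embeddings with event sets `Es`:
the maximum cardinality of a subfamily whose event sets are pairwise
disjoint. -/
noncomputable def misSupport {ι α : Type*} (Es : ι → Set α) : ℕ :=
  sSup {n | ∃ s : Finset ι, s.card = n ∧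
    (s : Set ι).Pairwise (fun i j => Disjoint (Es i) (Es j))}

/-- Anti-monotonicity of the MIS-based support: if every embedding of a
pattern `P'` (event sets `E'`) contains an embedding of a pattern `P`
(event sets `Ee`), via an injective assignment `f` (distinct
`P'`-embeddings contain distinct `P`-embeddings), with containment of event
sets, and event-overlap of the contained `P`-embeddings implies
event-overlap of the containing `P'`-embeddings, then the maximum size of a
pairwise event-disjoint set of `P'`-embeddings is at most that of the
`P`-embeddings. -/
theorem misSupport_antimono {ι' ι α : Type*} [Fintype ι'] [Fintype ι]
    (E' : ι' → Set α) (Ee : ι → Set α) (f : ι' → ι)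
    (hinj : Function.Injective f)
    (hsub : ∀ j, Ee (f j) ⊆ E' j)
    (hover : ∀ j1 j2, (Ee (f j1) ∩ Ee (f j2)).Nonempty →
      (E' j1 ∩ E' j2).Nonempty) :
    misSupport E' ≤ misSupport Ee := by
  classical
  apply csSup_le_csSup
  · exact ⟨Fintype.card ι, fun n ⟨s, hs, _⟩ => hs ▸ s.card_le_univ⟩
  · exact ⟨0, ∅, rfl, by simp⟩
  · rintro n ⟨s, hcard, hpair⟩
    refine ⟨s.image f, ?_, ?_⟩
    · rw [Finset.card_image_of_injective _ hinj, hcard]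
    · rintro _ hi _ hj hne
      simp only [Finset.coe_image, Set.mem_image] at hi hj
      obtain ⟨i, hi, rfl⟩ := hi
      obtain ⟨j, hj, rfl⟩ := hj
      refine Set.disjoint_left.mpr fun a ha hb => ?_
      have hd := hpair hi hj (fun e => hne (congrArg f e))
      have := hover i j ⟨a, ha, hb⟩
      exact this.ne_empty (Set.disjoint_iff_inter_eq_empty.mp hd)
end
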